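/- arXiv:1406.2259 — 3 statements merged into one kernel-verified Lean document; each statement's English description precedes it below -/
import Mathlib

section
/- Let f : [0,T] → ℝ be a nonnegative C² solution of the Neumann problem −f'' + (εk/(1−εkt)) f' + V(t) f = (1/b)(1−f²)f on [0,T] with f'(0) = f'(T) = 0, where V ≥ 0 is continuous, b > 0, and |εk t| < 1 on [0,T]. Then f(t) ≤ 1 for all t ∈ [0,T]. -/
/-- Second derivative test at a maximum point on `[0,T]` where the first
derivative vanishes. -/
lemma second_deriv_nonpos_at_max {T : ℝ} (hT : 0 < T) {f : ℝ → ℝ}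
    (hf : ContDiff ℝ 2 f) {t₀ : ℝ} (ht₀ : t₀ ∈ Set.Icc (0:ℝ) T)
    (hmax : IsMaxOn f (Set.Icc 0 T) t₀) (hd : deriv f t₀ = 0) :
    deriv (deriv f) t₀ ≤ 0 := by
  by_contra h
  push_neg at h
  have h2 : ContDiff ℝ ((1:ℕ)+1) f := by exact_mod_cast hf
  have hf1 : ContDiff ℝ 1 (deriv f) := (contDiff_succ_iff_deriv.mp h2).2.2
  have hcont'' : Continuous (deriv (deriv f)) := hf1.continuous_deriv le_rfl
  have hcont' : Continuous (deriv f) := hf1.continuous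
  have hcontf : Continuous f := (hf.differentiable (by norm_num)).continuous
  have hopen : IsOpen {x : ℝ | 0 < deriv (deriv f) x} :=
    isOpen_lt continuous_const hcont''
  rcases Metric.isOpen_iff.mp hopen t₀ h with ⟨δ, hδ, hball⟩
  rcases lt_or_eq_of_le ht₀.2 with hlt | heqT
  · -- t₀ < T : f increases to the right of t₀
    set s := min (t₀ + δ/2) T with hs
    have hstlt : t₀ < s := lt_min (by linarith) hlt
    have hsub : Set.Icc t₀ s ⊆ Metric.ball t₀ δ := by
      intro x hx
      rw [Metric.mem_ball, Real.dist_eq, abs_lt]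
      have h1 := hx.1
      have h2 := hx.2
      have h3 : s ≤ t₀ + δ/2 := min_le_left _ _
      constructor <;> linarith
    have hmono' : StrictMonoOn (deriv f) (Set.Icc t₀ s) := by
      apply strictMonoOn_of_deriv_pos (convex_Icc _ _) hcont'.continuousOn
      intro x hx
      rw [interior_Icc] at hx
      exact hball (hsub (Set.Ioo_subset_Icc_self hx))
    have hpos : ∀ x ∈ Set.Ioo t₀ s, 0 < deriv f x := by
      intro x hx
      have := hmono' ⟨le_rfl, le_of_lt hstlt⟩ (Set.Ioo_subset_Icc_self hx) hx.1
      rw [hd] at this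
      exact this
    have hmono : StrictMonoOn f (Set.Icc t₀ s) := by
      apply strictMonoOn_of_deriv_pos (convex_Icc _ _) hcontf.continuousOn
      intro x hx
      rw [interior_Icc] at hx
      exact hpos x hx
    have hlt' : f t₀ < f s :=
      hmono ⟨le_rfl, le_of_lt hstlt⟩ ⟨le_of_lt hstlt, le_rfl⟩ hstlt
    have : f s ≤ f t₀ := hmax ⟨le_trans ht₀.1 (le_of_lt hstlt), min_le_right _ _⟩
    linarith
  · -- t₀ = T : f decreases to the left of T
    subst heqT
    set s := max (t₀ - δ/2) 0 with hs
    have hslt : s < t₀ := max_lt (by linarith) hT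
    have hsub : Set.Icc s t₀ ⊆ Metric.ball t₀ δ := by
      intro x hx
      rw [Metric.mem_ball, Real.dist_eq, abs_lt]
      have h1 := hx.1
      have h2 := hx.2
      have h3 : t₀ - δ/2 ≤ s := le_max_left _ _
      constructor <;> linarith
    have hmono' : StrictMonoOn (deriv f) (Set.Icc s t₀) := by
      apply strictMonoOn_of_deriv_pos (convex_Icc _ _) hcont'.continuousOn
      intro x hx
      rw [interior_Icc] at hx
      exact hball (hsub (Set.Ioo_subset_Icc_self hx))
    have hneg : ∀ x ∈ Set.Ioo s t₀, deriv f x < 0 := by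
      intro x hx
      have := hmono' (Set.Ioo_subset_Icc_self hx) ⟨le_of_lt hslt, le_rfl⟩ hx.2
      rw [hd] at this
      exact this
    have hanti : StrictAntiOn f (Set.Icc s t₀) := by
      apply strictAntiOn_of_deriv_neg (convex_Icc _ _) hcontf.continuousOn
      intro x hx
      rw [interior_Icc] at hx
      exact hneg x hx
    have hlt' : f t₀ < f s :=
      hanti ⟨le_rfl, le_of_lt hslt⟩ ⟨le_of_lt hslt, le_rfl⟩ hslt
    have : f s ≤ f t₀ := hmax ⟨le_max_right _ _, le_of_lt hslt⟩
    linarith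

/-- Maximum-principle bound for the 1D Ginzburg–Landau profile: a nonnegative C²
solution of the Neumann problem
`−f'' + (εk/(1−εkt)) f' + V f = (1/b)(1−f²)f` on `[0,T]` satisfies `f ≤ 1`. -/
theorem oneD_profile_le_one (T ε k b : ℝ) (hT : 0 < T) (hb : 0 < b)
    (V f : ℝ → ℝ)
    (hV : ContinuousOn V (Set.Icc 0 T)) (hVpos : ∀ t ∈ Set.Icc (0:ℝ) T, 0 ≤ V t)
    (hf : ContDiff ℝ 2 f) (hfpos : ∀ t ∈ Set.Icc (0:ℝ) T, 0 ≤ f t)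
    (hbound : ∀ t ∈ Set.Icc (0:ℝ) T, |ε * k * t| < 1)
    (heq : ∀ t ∈ Set.Icc (0:ℝ) T,
      -(deriv (deriv f) t) + (ε * k / (1 - ε * k * t)) * deriv f t + V t * f t
        = (1 / b) * (1 - (f t) ^ 2) * f t)
    (hneu0 : deriv f 0 = 0) (hneuT : deriv f T = 0) :
    ∀ t ∈ Set.Icc (0:ℝ) T, f t ≤ 1 := by
  have hcontf : Continuous f := (hf.differentiable (by norm_num)).continuous
  obtain ⟨t₀, ht₀, hmax⟩ :=
    isCompact_Icc.exists_isMaxOn (Set.nonempty_Icc.mpr hT.le) hcontf.continuousOn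
  have key : f t₀ ≤ 1 := by
    by_contra h1
    push_neg at h1
    -- first derivative vanishes at the max point
    have d1 : deriv f t₀ = 0 := by
      rcases eq_or_lt_of_le ht₀.1 with h0 | h0
      · rw [← h0]; exact hneu0
      · rcases eq_or_lt_of_le ht₀.2 with hT' | hT'
        · rw [hT']; exact hneuT
        · have hloc : IsLocalMax f t₀ := hmax.isLocalMax (Icc_mem_nhds h0 hT')
          exact hloc.deriv_eq_zero
    have d2 : deriv (deriv f) t₀ ≤ 0 := second_deriv_nonpos_at_max hT hf ht₀ hmax d1
    have hE := heq t₀ ht₀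
    rw [d1, mul_zero] at hE
    have hVf : 0 ≤ V t₀ * f t₀ := mul_nonneg (hVpos _ ht₀) (hfpos _ ht₀)
    have hb' : 0 < 1 / b := one_div_pos.mpr hb
    have hkey : (1 / b) * (1 - (f t₀) ^ 2) * f t₀ < 0 := by
      have h2 : (1 - (f t₀) ^ 2) * f t₀ < 0 := by nlinarith
      calc (1 / b) * (1 - (f t₀) ^ 2) * f t₀
          = (1 / b) * ((1 - (f t₀) ^ 2) * f t₀) := by ring
        _ < 0 := mul_neg_of_pos_of_neg hb' h2
    linarith
  intro t ht
  exact le_trans (hmax ht) key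
end

section
/- Energy decoupling (Lassoued–Mironescu): let f : [0,T] → (0,∞) be a C² solution of −((1−εkt)f')' + (1−εkt)V(t)f = (1/b)(1−εkt)(1−f²)f with f'(0)=f'(T)=0, and let ψ = f·v with v ∈ H¹. Then ∫₀^T (1−εkt)(|ψ'|² + V|ψ|² − (1/(2b))(2|ψ|²−|ψ|⁴)) dt = ∫₀^T (1−εkt)(|f'|² + Vf² − (1/(2b))(2f²−f⁴)) dt + ∫₀^T (1−εkt)(f²|v'|² + (1/(2b)) f⁴(1−|v|²)²) dt. -/
/-- Energy decoupling (Lassoued–Mironescu): for a positive Neumann solution `f` of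
the 1D variational equation and `ψ = f·v`, the weighted 1D GL energy of `ψ` splits
as the energy of `f` plus a nonnegative reduced energy of `v`. -/
theorem energy_decoupling (T ε k b : ℝ) (hT : 0 < T) (hb : 0 < b)
    (hε : 0 ≤ ε) (hk : ε * k * T < 1)
    (V : ℝ → ℝ) (hV : ContinuousOn V (Set.Icc 0 T))
    (f : ℝ → ℝ) (hf : ContDiff ℝ 2 f) (hfpos : ∀ t ∈ Set.Icc (0:ℝ) T, 0 < f t)
    (hode : ∀ t ∈ Set.Icc (0:ℝ) T,
      -(deriv (fun s => (1 - ε * k * s) * deriv f s) t) + (1 - ε * k * t) * V t * f t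
        = (1 / b) * (1 - ε * k * t) * (1 - (f t) ^ 2) * f t)
    (hneu0 : deriv f 0 = 0) (hneuT : deriv f T = 0)
    (v : ℝ → ℂ) (hv : ContDiff ℝ 1 v) :
    (∫ t in (0:ℝ)..T, (1 - ε * k * t) *
        (‖deriv (fun s => (f s : ℂ) * v s) t‖ ^ 2 + V t * ‖(f t : ℂ) * v t‖ ^ 2
          - (1 / (2 * b)) * (2 * ‖(f t : ℂ) * v t‖ ^ 2 - ‖(f t : ℂ) * v t‖ ^ 4)))
      = (∫ t in (0:ℝ)..T, (1 - ε * k * t) *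
          ((deriv f t) ^ 2 + V t * (f t) ^ 2 - (1 / (2 * b)) * (2 * (f t) ^ 2 - (f t) ^ 4)))
        + ∫ t in (0:ℝ)..T, (1 - ε * k * t) *
            ((f t) ^ 2 * ‖deriv v t‖ ^ 2 + (1 / (2 * b)) * (f t) ^ 4 * (1 - ‖v t‖ ^ 2) ^ 2) := by
  -- basic regularity facts
  have hf11 : ContDiff ℝ (1 + 1) f := by exact_mod_cast hf
  have hf1 : Differentiable ℝ f := hf.differentiable two_ne_zero
  have hf' : ContDiff ℝ 1 (deriv f) := (contDiff_succ_iff_deriv.mp hf11).2.2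
  have hf'd : Differentiable ℝ (deriv f) := hf'.differentiable one_ne_zero
  have hf'c : Continuous (deriv f) := hf'.continuous
  have hf''c : Continuous (deriv (deriv f)) := by
    have h01 : ContDiff ℝ (0 + 1) (deriv f) := by exact_mod_cast hf'
    exact ((contDiff_succ_iff_deriv.mp h01).2.2).continuous
  have hv01 : ContDiff ℝ (0 + 1) v := by exact_mod_cast hv
  have hv1 : Differentiable ℝ v := hv.differentiable one_ne_zero
  have hvc : Continuous v := hv.continuous
  have hv'c : Continuous (deriv v) := ((contDiff_succ_iff_deriv.mp hv01).2.2).continuous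
  have hfc : Continuous f := hf.continuous
  -- norm squared in terms of re/im
  have normsq : ∀ z : ℂ, ‖z‖ ^ 2 = z.re ^ 2 + z.im ^ 2 := fun z => by
    rw [Complex.sq_norm, Complex.normSq_apply]; ring
  -- derivative of ψ = f·v
  have hψd : ∀ t, HasDerivAt (fun s => (f s : ℂ) * v s)
      ((Complex.ofReal (deriv f t)) * v t + (f t : ℂ) * deriv v t) t := fun t =>
    ((hf1 t).hasDerivAt.ofReal_comp).mul (hv1 t).hasDerivAt
  have hψderiv : deriv (fun s => (f s : ℂ) * v s)
      = fun t => (Complex.ofReal (deriv f t)) * v t + (f t : ℂ) * deriv v t :=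
    funext fun t => (hψd t).deriv
  -- the three integrands
  set Lf : ℝ → ℝ := fun t => (1 - ε * k * t) *
        (‖deriv (fun s => (f s : ℂ) * v s) t‖ ^ 2 + V t * ‖(f t : ℂ) * v t‖ ^ 2
          - (1 / (2 * b)) * (2 * ‖(f t : ℂ) * v t‖ ^ 2 - ‖(f t : ℂ) * v t‖ ^ 4)) with hLf
  set Af : ℝ → ℝ := fun t => (1 - ε * k * t) *
          ((deriv f t) ^ 2 + V t * (f t) ^ 2 - (1 / (2 * b)) * (2 * (f t) ^ 2 - (f t) ^ 4))
    with hAf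
  set Bf : ℝ → ℝ := fun t => (1 - ε * k * t) *
            ((f t) ^ 2 * ‖deriv v t‖ ^ 2 + (1 / (2 * b)) * (f t) ^ 4 * (1 - ‖v t‖ ^ 2) ^ 2)
    with hBf
  -- the potential function
  set G : ℝ → ℝ := fun t => ((v t).re ^ 2 + (v t).im ^ 2 - 1) *
      ((1 - ε * k * t) * (f t * deriv f t)) with hG
  -- derivative pieces for G
  have hwd : ∀ t : ℝ, HasDerivAt (fun s : ℝ => 1 - ε * k * s) (-(ε * k)) t := fun t => by
    simpa using ((hasDerivAt_id t).const_mul (ε * k)).const_sub 1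
  have hpd : ∀ t, HasDerivAt (fun s => (v s).re) ((deriv v t).re) t := fun t =>
    Complex.reCLM.hasFDerivAt.comp_hasDerivAt t (hv1 t).hasDerivAt
  have hqd : ∀ t, HasDerivAt (fun s => (v s).im) ((deriv v t).im) t := fun t =>
    Complex.imCLM.hasFDerivAt.comp_hasDerivAt t (hv1 t).hasDerivAt
  have hGd : ∀ t ∈ Set.Icc (0:ℝ) T, HasDerivAt G (Lf t - (Af t + Bf t)) t := by
    intro t ht
    have hm : HasDerivAt (fun s => (v s).re ^ 2 + (v s).im ^ 2 - 1)
        (2 * (v t).re * (deriv v t).re + 2 * (v t).im * (deriv v t).im) t := by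
      have h1 := (((hpd t).mul (hpd t)).add ((hqd t).mul (hqd t))).sub_const 1
      simp only [pow_two]
      exact h1.congr_deriv (by ring)
    have hh : HasDerivAt (fun s => (1 - ε * k * s) * (f s * deriv f s))
        (-(ε * k) * (f t * deriv f t)
          + (1 - ε * k * t) * (deriv f t * deriv f t + f t * deriv (deriv f) t)) t :=
      (hwd t).mul ((hf1 t).hasDerivAt.mul (hf'd t).hasDerivAt)
    have hGd' := hm.mul hh
    -- the value of (w f')' from the ODE
    have hwf' : deriv (fun s => (1 - ε * k * s) * deriv f s) t
        = -(ε * k) * deriv f t + (1 - ε * k * t) * deriv (deriv f) t :=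
      ((hwd t).mul (hf'd t).hasDerivAt).deriv
    have hode' := hode t ht
    rw [hwf'] at hode'
    refine hGd'.congr_deriv ?_
    -- expand all norms
    have e1 : ‖deriv (fun s => (f s : ℂ) * v s) t‖ ^ 2
        = (deriv f t * (v t).re + f t * (deriv v t).re) ^ 2
          + (deriv f t * (v t).im + f t * (deriv v t).im) ^ 2 := by
      rw [hψderiv, normsq]
      simp [Complex.add_re, Complex.add_im, Complex.mul_re, Complex.mul_im]
    have e2 : ‖(f t : ℂ) * v t‖ ^ 2 = (f t) ^ 2 * ((v t).re ^ 2 + (v t).im ^ 2) := by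
      rw [normsq]; simp [Complex.mul_re, Complex.mul_im]; ring
    have e3 : ‖(f t : ℂ) * v t‖ ^ 4 = ((f t) ^ 2 * ((v t).re ^ 2 + (v t).im ^ 2)) ^ 2 := by
      have : ‖(f t : ℂ) * v t‖ ^ 4 = (‖(f t : ℂ) * v t‖ ^ 2) ^ 2 := by ring
      rw [this, e2]
    have e4 : ‖deriv v t‖ ^ 2 = (deriv v t).re ^ 2 + (deriv v t).im ^ 2 := normsq _
    have e5 : ‖v t‖ ^ 2 = (v t).re ^ 2 + (v t).im ^ 2 := normsq _
    rw [hLf, hAf, hBf]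
    simp only
    rw [e1, e2, e3, e4, e5]
    linear_combination (-(((v t).re ^ 2 + (v t).im ^ 2 - 1) * f t)) * hode'
  -- continuity / integrability of the integrands
  have huIcc : Set.uIcc (0:ℝ) T = Set.Icc 0 T := Set.uIcc_of_le hT.le
  have hwc : Continuous (fun t : ℝ => 1 - ε * k * t) := by continuity
  have hLc : ContinuousOn Lf (Set.Icc 0 T) := by
    rw [hLf, hψderiv]
    apply ContinuousOn.mul hwc.continuousOn
    apply ContinuousOn.sub
    · apply ContinuousOn.add
      · exact (((Complex.continuous_ofReal.comp hf'c).mul hvc).add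
          ((Complex.continuous_ofReal.comp hfc).mul hv'c)).norm.pow 2 |>.continuousOn
      · exact hV.mul (((Complex.continuous_ofReal.comp hfc).mul hvc).norm.pow 2).continuousOn
    · exact (continuous_const.mul ((continuous_const.mul
        (((Complex.continuous_ofReal.comp hfc).mul hvc).norm.pow 2)).sub
        (((Complex.continuous_ofReal.comp hfc).mul hvc).norm.pow 4))).continuousOn
  have hAc : ContinuousOn Af (Set.Icc 0 T) := by
    rw [hAf]
    apply ContinuousOn.mul hwc.continuousOn
    exact ((hf'c.pow 2).continuousOn.add (hV.mul (hfc.pow 2).continuousOn)).sub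
      (continuous_const.mul ((continuous_const.mul (hfc.pow 2)).sub (hfc.pow 4))).continuousOn
  have hBc : ContinuousOn Bf (Set.Icc 0 T) := by
    rw [hBf]
    exact hwc.continuousOn.mul (((hfc.pow 2).mul (hv'c.norm.pow 2)).add
      ((continuous_const.mul (hfc.pow 4)).mul
        ((continuous_const.sub (hvc.norm.pow 2)).pow 2))).continuousOn
  have hLi : IntervalIntegrable Lf MeasureTheory.volume 0 T :=
    (hLc.mono (le_of_eq huIcc)).intervalIntegrable
  have hAi : IntervalIntegrable Af MeasureTheory.volume 0 T :=
    (hAc.mono (le_of_eq huIcc)).intervalIntegrable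
  have hBi : IntervalIntegrable Bf MeasureTheory.volume 0 T :=
    (hBc.mono (le_of_eq huIcc)).intervalIntegrable
  -- FTC
  have hFTC : (∫ t in (0:ℝ)..T, (Lf t - (Af t + Bf t))) = G T - G 0 := by
    refine intervalIntegral.integral_eq_sub_of_hasDerivAt (fun t ht => ?_) ?_
    · exact hGd t (huIcc ▸ ht)
    · exact (hLi.sub (hAi.add hBi))
  have hG0 : G 0 = 0 := by rw [hG]; simp [hneu0]
  have hGT : G T = 0 := by rw [hG]; simp [hneuT]
  have hsplit : (∫ t in (0:ℝ)..T, (Lf t - (Af t + Bf t)))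
      = (∫ t in (0:ℝ)..T, Lf t) - ((∫ t in (0:ℝ)..T, Af t) + (∫ t in (0:ℝ)..T, Bf t)) := by
    rw [intervalIntegral.integral_sub hLi (hAi.add hBi),
      intervalIntegral.integral_add hAi hBi]
  have : (∫ t in (0:ℝ)..T, Lf t) - ((∫ t in (0:ℝ)..T, Af t) + (∫ t in (0:ℝ)..T, Bf t)) = 0 := by
    rw [← hsplit, hFTC, hG0, hGT]; ring
  linarith [this]
end

section
/- Let u : R = [a,b]×[0,T] → ℂ be C¹ with Lipschitz bounds |∂_t|u|| ≤ L₁, |∂_s|u|| ≤ L₂, let ρ : [0,T] → [γ,1] be a weight bounded below by γ > 0, and suppose ∫_R ρ⁴ (1−|u|²)² ds dt ≤ E. If there is (s₀,t₀) in the interior of R (at distance at least σ/(4L₁) and σ/(4L₂) from the respective boundaries) with ||u(s₀,t₀)| − 1| ≥ σ, then E ≥ γ⁴ σ⁴ /(64 L₁ L₂). -/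
open Set Filter

/-- One-sided propagation: a nonnegative continuous function, differentiable with
`deriv` bounded by `L` wherever it is positive, grows at most linearly. -/
lemma propagate_right (g : ℝ → ℝ) (L x₀ X : ℝ) (hL : 0 < L) (hx : x₀ ≤ X)
    (hc : ContinuousOn g (Set.Icc x₀ X))
    (hg0 : ∀ y, 0 ≤ g y)
    (hd : ∀ y ∈ Set.Icc x₀ X, 0 < g y → DifferentiableAt ℝ g y)
    (hb : ∀ y ∈ Set.Icc x₀ X, |deriv g y| ≤ L) :
    g X ≤ g x₀ + L * (X - x₀) := by
  have key : ∀ ε > 0, g X ≤ g x₀ + (L + ε) * (X - x₀) := by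
    intro ε hε
    have hf' : ∀ x ∈ Set.Ico x₀ X, ∀ r : ℝ, (fun _ : ℝ => L) x < r →
        ∃ᶠ z in nhdsWithin x (Set.Ioi x), slope g x z < r := by
      intro x hxm r hr
      rcases (hg0 x).lt_or_eq with hpos | hzero
      · -- differentiable point: slope tends to deriv g x ≤ L < r
        have hdiff := hd x (Set.Ico_subset_Icc_self hxm) hpos
        have hslope : Tendsto (slope g x) (nhdsWithin x {x}ᶜ) (nhds (deriv g x)) :=
          hasDerivAt_iff_tendsto_slope.1 hdiff.hasDerivAt
        have hslope' : Tendsto (slope g x) (nhdsWithin x (Set.Ioi x)) (nhds (deriv g x)) :=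
          hslope.mono_left (nhdsWithin_mono x (fun z hz => ne_of_gt hz))
        have hlt : deriv g x < r :=
          lt_of_le_of_lt ((le_abs_self _).trans (hb x (Set.Ico_subset_Icc_self hxm))) hr
        exact (hslope'.eventually_lt_const hlt).frequently
      · -- g x = 0
        by_contra hcon
        rw [Filter.not_frequently] at hcon
        simp only [not_lt] at hcon
        rcases (mem_nhdsGT_iff_exists_Ioo_subset).1 hcon with ⟨c, hc', hsub⟩
        have hxX : x < X := hxm.2
        set c' : ℝ := min c X with hc'def
        have hxc' : x < c' := lt_min hc' hxX
        have hIoo : ∀ z ∈ Set.Ioo x c', r ≤ slope g x z := by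
          intro z hz
          exact hsub ⟨hz.1, lt_of_lt_of_le hz.2 (min_le_left _ _)⟩
        have hsubI : Set.Ioo x c' ⊆ Set.Icc x₀ X := fun z hz =>
          ⟨le_of_lt (lt_of_le_of_lt hxm.1 hz.1), le_of_lt (lt_of_lt_of_le hz.2 (min_le_right _ _))⟩
        have hLr : L < r := hr
        have hrpos : 0 < r := hL.trans hLr
        have hgpos : ∀ z ∈ Set.Ioo x c', 0 < g z := by
          intro z hz
          have h1 := hIoo z hz
          rw [slope_def_field, ← hzero] at h1
          rw [sub_zero] at h1
          have hzx : 0 < z - x := sub_pos.2 hz.1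
          have h2 := (le_div_iff₀ hzx).1 h1
          nlinarith
        set z : ℝ := x + (c' - x) / 2 with hzdef
        have hzmem : z ∈ Set.Ioo x c' := ⟨by rw [hzdef]; linarith, by rw [hzdef]; linarith⟩
        -- MVT on [w, z] for w ∈ (x, z)
        have hstep : ∀ w ∈ Set.Ioo x z, g z ≤ g w + L * (z - w) := by
          intro w hw
          have hwz : w < z := hw.2
          have hIncl : Set.Icc w z ⊆ Set.Ioo x c' := fun y hy =>
            ⟨lt_of_lt_of_le hw.1 hy.1, lt_of_le_of_lt hy.2 hzmem.2⟩
          have hcont : ContinuousOn g (Set.Icc w z) := fun y hy =>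
            ((hd y (hsubI (hIncl hy)) (hgpos y (hIncl hy))).continuousAt).continuousWithinAt
          have hdiff : DifferentiableOn ℝ g (Set.Ioo w z) := fun y hy =>
            ((hd y (hsubI (hIncl (Set.Ioo_subset_Icc_self hy))) (hgpos y (hIncl (Set.Ioo_subset_Icc_self hy)))).differentiableWithinAt)
          rcases exists_deriv_eq_slope g hwz hcont hdiff with ⟨ξ, hξ, hderiv⟩
          have hξI : ξ ∈ Set.Icc x₀ X := hsubI (hIncl (Set.Ioo_subset_Icc_self hξ))
          have hbd := hb ξ hξI
          rw [hderiv] at hbd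
          have h2 : (g z - g w) / (z - w) ≤ L := (le_abs_self _).trans hbd
          have hzw : 0 < z - w := sub_pos.2 hwz
          nlinarith [(div_le_iff₀ hzw).1 h2]
        -- limit w → x⁺
        have hne : (nhdsWithin x (Set.Ioo x z)).NeBot := by
          apply IsGLB.nhdsWithin_neBot (isGLB_Ioo hzmem.1)
          exact Set.nonempty_Ioo.2 hzmem.1
        have htend : Tendsto (fun w => g w + L * (z - w)) (nhdsWithin x (Set.Ioo x z))
            (nhds (g x + L * (z - x))) := by
          have h1 : Tendsto g (nhdsWithin x (Set.Ioo x z)) (nhds (g x)) := by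
            have := (hc x ⟨hxm.1, le_of_lt hxX⟩)
            exact this.tendsto.mono_left (nhdsWithin_mono x (fun y hy => hsubI ⟨hy.1, lt_trans hy.2 hzmem.2⟩))
          exact h1.add ((tendsto_const_nhds.sub (tendsto_nhdsWithin_of_tendsto_nhds tendsto_id)).const_mul L)
        have hglez : g z ≤ g x + L * (z - x) := by
          refine ge_of_tendsto htend ?_
          filter_upwards [self_mem_nhdsWithin] with w hw
          exact hstep w ⟨hw.1, hw.2⟩
        have hrlez := hIoo z hzmem
        rw [slope_def_field, ← hzero, sub_zero] at hrlez
        have hzx : 0 < z - x := sub_pos.2 hzmem.1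
        rw [← hzero] at hglez
        have h3 := (le_div_iff₀ hzx).1 hrlez
        nlinarith [mul_pos (sub_pos.2 hLr) hzx]
    have hB : ∀ x : ℝ, HasDerivAt (fun y => g x₀ + (L + ε) * (y - x₀)) (L + ε) x := by
      intro x
      simpa using (((hasDerivAt_id x).sub_const x₀).const_mul (L + ε)).const_add (g x₀)
    have := image_le_of_liminf_slope_right_lt_deriv_boundary (f := g) (f' := fun _ => L)
      hc hf' (B := fun y => g x₀ + (L + ε) * (y - x₀)) (B' := fun _ => L + ε)
      (by simp) hB (fun x _ _ => by show L < L + ε; linarith)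
    exact this (Set.right_mem_Icc.2 hx)
  -- take ε → 0
  rcases eq_or_lt_of_le hx with heq | hlt
  · subst heq; simpa using key 1 one_pos
  · refine le_of_forall_pos_le_add ?_
    intro δ hδ
    have hXx : 0 < X - x₀ := sub_pos.2 hlt
    have := key (δ / (X - x₀)) (div_pos hδ hXx)
    calc g X ≤ g x₀ + (L + δ / (X - x₀)) * (X - x₀) := this
      _ = g x₀ + L * (X - x₀) + δ := by field_simp; ring

/-- Two-sided propagation on a closed interval. -/
lemma propagate_abs (g : ℝ → ℝ) (L c d x₀ x : ℝ) (hL : 0 < L)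
    (hx₀ : x₀ ∈ Set.Icc c d) (hx : x ∈ Set.Icc c d)
    (hc : ContinuousOn g (Set.Icc c d))
    (hg0 : ∀ y, 0 ≤ g y)
    (hd : ∀ y ∈ Set.Icc c d, 0 < g y → DifferentiableAt ℝ g y)
    (hb : ∀ y ∈ Set.Icc c d, |deriv g y| ≤ L) :
    g x ≤ g x₀ + L * |x - x₀| := by
  rcases le_total x₀ x with h | h
  · have hsub : Set.Icc x₀ x ⊆ Set.Icc c d := Set.Icc_subset_Icc hx₀.1 hx.2
    have := propagate_right g L x₀ x hL h (hc.mono hsub) hg0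
      (fun y hy => hd y (hsub hy)) (fun y hy => hb y (hsub hy))
    rwa [abs_of_nonneg (sub_nonneg.2 h)]
  · have hsub : Set.Icc x x₀ ⊆ Set.Icc c d := Set.Icc_subset_Icc hx.1 hx₀.2
    set h' : ℝ → ℝ := fun y => g (x + x₀ - y) with hh'
    have hmap : ∀ y ∈ Set.Icc x x₀, x + x₀ - y ∈ Set.Icc x x₀ := by
      intro y hy; exact ⟨by linarith [hy.2], by linarith [hy.1]⟩
    have hrefl : Continuous fun y : ℝ => x + x₀ - y := by continuity
    have hcont : ContinuousOn h' (Set.Icc x x₀) :=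
      (hc.mono hsub).comp hrefl.continuousOn (fun y hy => hmap y hy)
    have hd' : ∀ y ∈ Set.Icc x x₀, 0 < h' y → DifferentiableAt ℝ h' y := by
      intro y hy hpos
      have := hd (x + x₀ - y) (hsub (hmap y hy)) hpos
      exact this.comp y ((differentiableAt_const (x + x₀)).sub differentiableAt_id)
    have hb' : ∀ y ∈ Set.Icc x x₀, |deriv h' y| ≤ L := by
      intro y hy
      have : deriv h' y = -deriv g (x + x₀ - y) := deriv_comp_const_sub g (x + x₀) y
      rw [this, abs_neg]
      exact hb _ (hsub (hmap y hy))
    have := propagate_right h' L x x₀ hL h hcont (fun y => hg0 _) hd' hb'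
    have hx₀' : h' x₀ = g x := by simp [hh']
    have hx' : h' x = g x₀ := by simp [hh']
    rw [hx₀', hx'] at this
    rwa [abs_of_nonpos (sub_nonpos.2 h), neg_sub]

/-- Combination of the propagation lemma with the weighted L⁴ energy bound:
a deviation `σ` of `|u|` from 1 at an interior point forces the lower bound
`E ≥ γ⁴σ⁴/(64 L₁ L₂)` on the energy. -/
theorem deviation_energy_lower_bound (a b T L₁ L₂ σ s₀ t₀ γ E : ℝ)
    (hL₁ : 0 < L₁) (hL₂ : 0 < L₂) (hσ : 0 < σ) (hγ : 0 < γ)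
    (u : ℝ → ℝ → ℂ) (hu : ContDiff ℝ 1 (fun p : ℝ × ℝ => u p.1 p.2))
    (ρ : ℝ → ℝ) (hρc : ContinuousOn ρ (Set.Icc 0 T))
    (hρ : ∀ t ∈ Set.Icc (0:ℝ) T, γ ≤ ρ t ∧ ρ t ≤ 1)
    (hdt : ∀ s t : ℝ, s ∈ Set.Icc a b → t ∈ Set.Icc (0:ℝ) T →
      |deriv (fun t' => ‖u s t'‖) t| ≤ L₁)
    (hds : ∀ s t : ℝ, s ∈ Set.Icc a b → t ∈ Set.Icc (0:ℝ) T →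
      |deriv (fun s' => ‖u s' t‖) s| ≤ L₂)
    (hub : ∀ s t : ℝ, s ∈ Set.Icc a b → t ∈ Set.Icc (0:ℝ) T → ‖u s t‖ ≤ 1)
    (hE : (∫ s in a..b, ∫ t in (0:ℝ)..T, (ρ t) ^ 4 * (1 - ‖u s t‖ ^ 2) ^ 2) ≤ E)
    (hs₀l : a ≤ s₀ - σ / (4 * L₂)) (hs₀r : s₀ + σ / (4 * L₂) ≤ b)
    (ht₀l : 0 ≤ t₀ - σ / (4 * L₁)) (ht₀r : t₀ + σ / (4 * L₁) ≤ T)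
    (hdev : σ ≤ |‖u s₀ t₀‖ - 1|) :
    γ ^ 4 * σ ^ 4 / (64 * L₁ * L₂) ≤ E := by
  set d₁ : ℝ := σ / (4 * L₁) with hd₁def
  set d₂ : ℝ := σ / (4 * L₂) with hd₂def
  have hd₁pos : 0 < d₁ := div_pos hσ (by positivity)
  have hd₂pos : 0 < d₂ := div_pos hσ (by positivity)
  have hs₀mem : s₀ ∈ Set.Icc a b := ⟨by linarith, by linarith⟩
  have ht₀mem : t₀ ∈ Set.Icc (0:ℝ) T := ⟨by linarith, by linarith⟩
  have hT0 : (0:ℝ) ≤ T := by linarith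
  have Ucont : Continuous (fun p : ℝ × ℝ => u p.1 p.2) := hu.continuous
  have Udiff : Differentiable ℝ (fun p : ℝ × ℝ => u p.1 p.2) := hu.differentiable one_ne_zero
  have hct : ∀ s : ℝ, Continuous (fun t' => ‖u s t'‖) := fun s =>
    (Ucont.comp (continuous_const.prodMk continuous_id)).norm
  have hcs : ∀ t : ℝ, Continuous (fun s' => ‖u s' t‖) := fun t =>
    (Ucont.comp (continuous_id.prodMk continuous_const)).norm
  have hdiff_t : ∀ s t : ℝ, u s t ≠ 0 → DifferentiableAt ℝ (fun t' => ‖u s t'‖) t := by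
    intro s t h0
    have h1 : DifferentiableAt ℝ (fun t' => u s t') t :=
      by have := (Udiff (s, t)).comp t ((differentiableAt_const s).prodMk differentiableAt_id); exact this
    exact h1.norm ℝ h0
  have hdiff_s : ∀ s t : ℝ, u s t ≠ 0 → DifferentiableAt ℝ (fun s' => ‖u s' t‖) s := by
    intro s t h0
    have h1 : DifferentiableAt ℝ (fun s' => u s' t) s :=
      by have := (Udiff (s, t)).comp (𝕜 := ℝ) s ((differentiableAt_fun_id (x := s)).prodMk (differentiableAt_const t)); exact this
    exact h1.norm ℝ h0
  have hu0 : ‖u s₀ t₀‖ ≤ 1 := hub s₀ t₀ hs₀mem ht₀mem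
  have hdev' : σ ≤ 1 - ‖u s₀ t₀‖ := by
    rwa [abs_of_nonpos (by linarith), neg_sub] at hdev
  have hσ1 : σ ≤ 1 := by linarith [norm_nonneg (u s₀ t₀)]
  have hL₁d : L₁ * d₁ = σ / 4 := by rw [hd₁def]; field_simp
  have hL₂d : L₂ * d₂ = σ / 4 := by rw [hd₂def]; field_simp
  -- propagation
  have hprop : ∀ s ∈ Set.Icc (s₀ - d₂) (s₀ + d₂), ∀ t ∈ Set.Icc (t₀ - d₁) (t₀ + d₁),
      ‖u s t‖ ≤ 1 - σ / 2 := by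
    intro s hs t ht
    have hsab : s ∈ Set.Icc a b := ⟨le_trans hs₀l hs.1, le_trans hs.2 hs₀r⟩
    have ht0T : t ∈ Set.Icc (0:ℝ) T := ⟨le_trans ht₀l ht.1, le_trans ht.2 ht₀r⟩
    have step1 : ‖u s₀ t‖ ≤ ‖u s₀ t₀‖ + L₁ * |t - t₀| := by
      refine propagate_abs (fun t' => ‖u s₀ t'‖) L₁ 0 T t₀ t hL₁ ht₀mem ht0T
        (hct s₀).continuousOn (fun y => norm_nonneg _) ?_ (fun y hy => hdt s₀ y hs₀mem hy)
      intro y hy hpos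
      exact hdiff_t s₀ y (norm_pos_iff.1 hpos)
    have step2 : ‖u s t‖ ≤ ‖u s₀ t‖ + L₂ * |s - s₀| := by
      refine propagate_abs (fun s' => ‖u s' t‖) L₂ a b s₀ s hL₂ hs₀mem hsab
        (hcs t).continuousOn (fun y => norm_nonneg _) ?_ (fun y hy => hds y t hy ht0T)
      intro y hy hpos
      exact hdiff_s y t (norm_pos_iff.1 hpos)
    have habs1 : |t - t₀| ≤ d₁ := abs_le.2 ⟨by linarith [ht.1], by linarith [ht.2]⟩
    have habs2 : |s - s₀| ≤ d₂ := abs_le.2 ⟨by linarith [hs.1], by linarith [hs.2]⟩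
    have hm1 : L₁ * |t - t₀| ≤ σ / 4 :=
      le_trans (mul_le_mul_of_nonneg_left habs1 hL₁.le) (le_of_eq hL₁d)
    have hm2 : L₂ * |s - s₀| ≤ σ / 4 :=
      le_trans (mul_le_mul_of_nonneg_left habs2 hL₂.le) (le_of_eq hL₂d)
    linarith
  -- pointwise lower bound on the integrand
  have hpt : ∀ s ∈ Set.Icc (s₀ - d₂) (s₀ + d₂), ∀ t ∈ Set.Icc (t₀ - d₁) (t₀ + d₁),
      γ ^ 4 * (σ / 2) ^ 2 ≤ ρ t ^ 4 * (1 - ‖u s t‖ ^ 2) ^ 2 := by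
    intro s hs t ht
    have hsab : s ∈ Set.Icc a b := ⟨le_trans hs₀l hs.1, le_trans hs.2 hs₀r⟩
    have ht0T : t ∈ Set.Icc (0:ℝ) T := ⟨le_trans ht₀l ht.1, le_trans ht.2 ht₀r⟩
    have hg := hprop s hs t ht
    have hub' : ‖u s t‖ ≤ 1 := hub s t hsab ht0T
    have h1 : σ / 2 ≤ 1 - ‖u s t‖ ^ 2 := by nlinarith [norm_nonneg (u s t)]
    have h2 : (σ / 2) ^ 2 ≤ (1 - ‖u s t‖ ^ 2) ^ 2 := pow_le_pow_left₀ (by positivity) h1 2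
    have h3 : γ ^ 4 ≤ ρ t ^ 4 := pow_le_pow_left₀ hγ.le (hρ t ht0T).1 4
    exact mul_le_mul h3 h2 (by positivity) (by positivity)
  -- continuous replacement for ρ
  set ρ' : ℝ → ℝ := fun t => ρ (max 0 (min t T)) with hρ'def
  have hρ'cont : Continuous ρ' := by
    apply hρc.comp_continuous (continuous_const.max (continuous_id.min continuous_const))
    intro t
    exact ⟨le_max_left _ _, max_le hT0 (min_le_right _ _)⟩
  have hρ'eq : ∀ t ∈ Set.Icc (0:ℝ) T, ρ' t = ρ t := by
    intro t ht
    rw [hρ'def]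
    simp only [min_eq_left ht.2, max_eq_right ht.1]
  set f : ℝ → ℝ → ℝ := fun s t => ρ' t ^ 4 * (1 - ‖u s t‖ ^ 2) ^ 2 with hfdef
  have hfcont : Continuous (Function.uncurry f) :=
    ((hρ'cont.comp continuous_snd).pow 4).mul ((continuous_const.sub (Ucont.norm.pow 2)).pow 2)
  have hfnn : ∀ s t, 0 ≤ f s t := fun s t => by positivity
  have hfs : ∀ s : ℝ, Continuous (f s) := fun s =>
    hfcont.comp (continuous_const.prodMk continuous_id)
  set F : ℝ → ℝ := fun s => ∫ t in (0:ℝ)..T, f s t with hFdef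
  have hFcont : Continuous F :=
    intervalIntegral.continuous_parametric_intervalIntegral_of_continuous' (μ := MeasureTheory.volume) hfcont 0 T
  have hFnn : ∀ s, 0 ≤ F s := fun s =>
    intervalIntegral.integral_nonneg hT0 (fun t _ => hfnn s t)
  -- rewrite hE
  have hEq : (fun s => ∫ t in (0:ℝ)..T, (ρ t) ^ 4 * (1 - ‖u s t‖ ^ 2) ^ 2) = F := by
    funext s
    refine intervalIntegral.integral_congr ?_
    intro t ht
    rw [Set.uIcc_of_le hT0] at ht
    simp only [hfdef, hρ'eq t ht]
  rw [hEq] at hE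
  -- inner integral bound
  have hinner : ∀ s ∈ Set.Icc (s₀ - d₂) (s₀ + d₂), γ ^ 4 * (σ / 2) ^ 2 * (2 * d₁) ≤ F s := by
    intro s hs
    have h1 : ∫ _t in (t₀ - d₁)..(t₀ + d₁), (γ ^ 4 * (σ / 2) ^ 2 : ℝ) ≤
        ∫ t in (t₀ - d₁)..(t₀ + d₁), f s t := by
      refine intervalIntegral.integral_mono_on (by linarith) intervalIntegrable_const
        ((hfs s).intervalIntegrable _ _) ?_
      intro t ht
      have ht0T : t ∈ Set.Icc (0:ℝ) T := ⟨le_trans ht₀l ht.1, le_trans ht.2 ht₀r⟩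
      have := hpt s hs t ht
      simpa only [hfdef, hρ'eq t ht0T] using this
    have e1 : (∫ t in (0:ℝ)..(t₀ - d₁), f s t) + (∫ t in (t₀ - d₁)..(t₀ + d₁), f s t) =
        ∫ t in (0:ℝ)..(t₀ + d₁), f s t :=
      intervalIntegral.integral_add_adjacent_intervals ((hfs s).intervalIntegrable _ _)
        ((hfs s).intervalIntegrable _ _)
    have e2 : (∫ t in (0:ℝ)..(t₀ + d₁), f s t) + (∫ t in (t₀ + d₁)..T, f s t) = F s :=
      intervalIntegral.integral_add_adjacent_intervals ((hfs s).intervalIntegrable _ _)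
        ((hfs s).intervalIntegrable _ _)
    have n1 : 0 ≤ ∫ t in (0:ℝ)..(t₀ - d₁), f s t :=
      intervalIntegral.integral_nonneg ht₀l (fun t _ => hfnn s t)
    have n2 : 0 ≤ ∫ t in (t₀ + d₁)..T, f s t :=
      intervalIntegral.integral_nonneg (by linarith) (fun t _ => hfnn s t)
    have h0 : ∫ _t in (t₀ - d₁)..(t₀ + d₁), (γ ^ 4 * (σ / 2) ^ 2 : ℝ) =
        γ ^ 4 * (σ / 2) ^ 2 * (2 * d₁) := by
      rw [intervalIntegral.integral_const, smul_eq_mul]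
      ring
    linarith
  -- outer integral bound
  have h1 : ∫ _s in (s₀ - d₂)..(s₀ + d₂), (γ ^ 4 * (σ / 2) ^ 2 * (2 * d₁) : ℝ) ≤
      ∫ s in (s₀ - d₂)..(s₀ + d₂), F s := by
    refine intervalIntegral.integral_mono_on (by linarith) intervalIntegrable_const
      (hFcont.intervalIntegrable _ _) ?_
    intro s hs
    exact hinner s hs
  have e1 : (∫ s in a..(s₀ - d₂), F s) + (∫ s in (s₀ - d₂)..(s₀ + d₂), F s) =
      ∫ s in a..(s₀ + d₂), F s :=
    intervalIntegral.integral_add_adjacent_intervals (hFcont.intervalIntegrable _ _)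
      (hFcont.intervalIntegrable _ _)
  have e2 : (∫ s in a..(s₀ + d₂), F s) + (∫ s in (s₀ + d₂)..b, F s) = ∫ s in a..b, F s :=
    intervalIntegral.integral_add_adjacent_intervals (hFcont.intervalIntegrable _ _)
      (hFcont.intervalIntegrable _ _)
  have n1 : 0 ≤ ∫ s in a..(s₀ - d₂), F s :=
    intervalIntegral.integral_nonneg hs₀l (fun s _ => hFnn s)
  have n2 : 0 ≤ ∫ s in (s₀ + d₂)..b, F s :=
    intervalIntegral.integral_nonneg hs₀r (fun s _ => hFnn s)
  have h0 : ∫ _s in (s₀ - d₂)..(s₀ + d₂), (γ ^ 4 * (σ / 2) ^ 2 * (2 * d₁) : ℝ) =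
      γ ^ 4 * (σ / 2) ^ 2 * (2 * d₁) * (2 * d₂) := by
    rw [intervalIntegral.integral_const, smul_eq_mul]
    ring
  have hchain : γ ^ 4 * (σ / 2) ^ 2 * (2 * d₁) * (2 * d₂) ≤ E := by linarith
  have hfinal : γ ^ 4 * σ ^ 4 / (64 * L₁ * L₂) ≤ γ ^ 4 * (σ / 2) ^ 2 * (2 * d₁) * (2 * d₂) := by
    have heq : γ ^ 4 * (σ / 2) ^ 2 * (2 * d₁) * (2 * d₂) = γ ^ 4 * σ ^ 4 / (16 * L₁ * L₂) := by
      rw [hd₁def, hd₂def]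
      field_simp
      ring
    rw [heq, div_le_div_iff₀ (by positivity) (by positivity)]
    nlinarith [pow_pos hγ 4, pow_pos hσ 4, mul_pos hL₁ hL₂,
      mul_pos (mul_pos (pow_pos hγ 4) (pow_pos hσ 4)) (mul_pos hL₁ hL₂)]
  linarith
end
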